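/- Let F be a finitely generated free group and H an infinite, finitely generated, commensurated subgroup of F (i.e. gHg⁻¹ is commensurable with H for every g ∈ F). Then H has finite index in F. -/

import Mathlib

/-!
Fix a nontrivial `h ∈ H`. Commensurability puts a nontrivial power of every conjugate `g⁻¹ h g`
into `H`, and after a conjugation `h` is given by a cyclically reduced word `W`. If neither `W`
nor `W⁻¹` cancels against the reduced word of `y`, then `y⁻¹ W^k y` is reduced as written, so the
word of `y` is a suffix of the word of an element of `H`. For finitely generated `H` the cosets
of such suffixes form a finite set (the vertices of the Stallings graph of `H`), since a suffix of
a reduced product is a suffix of a factor up to right multiplication by the other factor. With at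
least two generators, prepending one of four fixed letters brings any `y` into this position, so
`H` has finitely many cosets. In rank one the free group is cyclic.
-/

open List

/-- The conjugate `g A g⁻¹` of a subgroup. -/
def conjSubgroup {F : Type*} [Group F] (g : F) (A : Subgroup F) : Subgroup F :=
  A.map (MulAut.conj g).toMonoidHom

theorem mem_conjSubgroup {G : Type*} [Group G] {g x : G} {A : Subgroup G} :
    x ∈ conjSubgroup g A ↔ g⁻¹ * x * g ∈ A := by
  constructor
  · rintro ⟨a, ha, rfl⟩
    simpa [MulAut.conj_apply, mul_assoc] using ha
  · intro hx
    exact ⟨g⁻¹ * x * g, hx, by simp [MulAut.conj_apply, mul_assoc]⟩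

theorem Subgroup.index_ne_zero_of_isCyclic {G : Type*} [Group G] [IsCyclic G] {H : Subgroup G}
    (hH : H ≠ ⊥) : H.index ≠ 0 := by
  obtain ⟨g, hg⟩ := IsCyclic.exists_zpow_surjective (G := G)
  obtain ⟨x, hxH, hx⟩ := H.bot_or_exists_ne_one.resolve_left hH
  obtain ⟨n, hn⟩ := hg x
  have hn0 : n ≠ 0 := by rintro rfl; simp [← hn] at hx
  have hper : Function.Periodic (fun m : ℤ => ((g ^ m : G) : G ⧸ H)) |n| := fun m => by
    have : g ^ |n| ∈ H := by
      rcases abs_choice n with h | h <;> simp [h, zpow_neg, hn, hxH]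
    simp only [zpow_add, QuotientGroup.mk_mul_of_mem _ this]
  rw [index_ne_zero_iff_finite, ← Set.finite_univ_iff]
  refine ((Set.finite_Ico 0 |n|).image fun m => ((g ^ m : G) : G ⧸ H)).subset fun q _ => ?_
  obtain ⟨y, rfl⟩ := QuotientGroup.mk_surjective q
  obtain ⟨m, rfl⟩ := hg y
  obtain ⟨r, hr, hmr⟩ := hper.exists_mem_Ico₀ (abs_pos.mpr hn0) m
  exact ⟨r, hr, hmr.symm⟩

namespace FreeGroup

variable {α : Type*} {L L₁ L₂ : List (α × Bool)}

theorem IsReduced.invRev (h : IsReduced L) : IsReduced (invRev L) := by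
  unfold IsReduced FreeGroup.invRev
  rw [isChain_reverse, isChain_map]
  exact h.imp fun a b hab h₁ => by simpa using (hab h₁.symm).symm

theorem exists_mem_isReduced_append_cons {t : Finset (α × Bool)} (ht : 3 < t.card)
    (h₁ : IsReduced L₁) (h₂ : IsReduced L₂) (h : IsReduced L) :
    ∃ s ∈ t, IsReduced (L₁ ++ s :: L) ∧ IsReduced (L₂ ++ s :: L) := by
  classical
  set forbidden := (L₁.getLast?.toFinset ∪ L₂.getLast?.toFinset ∪ L.head?.toFinset).image
    fun a : α × Bool => (a.1, !a.2)
  have h_one (o : Option (α × Bool)) : o.toFinset.card ≤ 1 := by cases o <;> simp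
  have hcard : forbidden.card < t.card :=
    calc forbidden.card ≤ _ := Finset.card_image_le
      _ ≤ _ := Finset.card_union_le _ _
      _ ≤ _ := Nat.add_le_add_right (Finset.card_union_le _ _) _
      _ ≤ 1 + 1 + 1 := by gcongr <;> exact h_one _
      _ < t.card := ht
  obtain ⟨s, hst, hs⟩ := Finset.exists_mem_notMem_of_card_lt_card hcard
  have hcancel : ∀ a : α × Bool, (a.1, !a.2) ≠ s → a.1 = s.1 → a.2 = s.2 := fun a ha h₁ => by
    by_contra h₂
    exact ha (Prod.ext h₁ (by revert h₂; cases a.2 <;> cases s.2 <;> simp))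
  have hsL : IsReduced (s :: L) := List.isChain_cons.2 ⟨fun b hb hsb => ?_, h⟩
  · refine ⟨s, hst, h₁.append hsL ?_, h₂.append hsL ?_⟩ <;>
      · rintro a ha _ ⟨⟩
        exact hcancel a fun has => hs (Finset.mem_image.2 ⟨a, by simp [ha], has⟩)
  · exact (hcancel b (fun hbs => hs (Finset.mem_image.2 ⟨b, by simp [hb], hbs⟩)) hsb.symm).symm

section DecidableEq

variable [DecidableEq α]

theorem IsReduced.exists_reduce_append_eq :
    ∀ {L₁ L₂ : List (α × Bool)}, IsReduced L₁ → IsReduced L₂ →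
      ∃ p r q, L₁ = p ++ r ∧ L₂ = FreeGroup.invRev r ++ q ∧ reduce (L₁ ++ L₂) = p ++ q
  | L₁, [], h₁, _ => ⟨L₁, [], [], by simp, by simp, by simpa using h₁.reduce_eq⟩
  | L₁, b :: L₂, h₁, h₂ => by
    by_cases hcancel : ∃ L, L₁ = L ++ [(b.1, !b.2)]
    · obtain ⟨L, rfl⟩ := hcancel
      obtain ⟨p, r, q, rfl, rfl, hred⟩ :=
        exists_reduce_append_eq (L₂ := L₂) (h₁.infix ⟨[], _, rfl⟩) (h₂.infix ⟨[b], [], by simp⟩)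
      refine ⟨p, r ++ [(b.1, !b.2)], q, by simp, by simp [FreeGroup.invRev], ?_⟩
      rw [← hred]
      exact reduce.Step.eq (by simpa using Red.Step.not_rev (L₁ := p ++ r) (x := b.1) (b := b.2))
    · refine ⟨L₁, [], b :: L₂, by simp, by simp, IsReduced.reduce_eq ?_⟩
      refine List.IsChain.append h₁ h₂ fun a ha b' hb' hab => ?_
      simp only [head?_cons, Option.mem_some_iff] at hb'
      subst hb'
      by_contra hne
      refine hcancel ⟨L₁.dropLast, ?_⟩
      have : a = (b.1, !b.2) := Prod.ext hab (by revert hne; cases a.2 <;> cases b.2 <;> simp)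
      rw [← this]
      exact (List.dropLast_append_getLast? _ ha).symm

theorem exists_toWord_mul (x y : FreeGroup α) :
    ∃ p r q, x.toWord = p ++ r ∧ y.toWord = invRev r ++ q ∧ (x * y).toWord = p ++ q := by
  rw [toWord_mul]
  exact isReduced_toWord.exists_reduce_append_eq isReduced_toWord

def suffixCosets (H : Subgroup (FreeGroup α)) : Set (FreeGroup α ⧸ H) :=
  {c | ∃ u ∈ H, ∃ L, L <:+ u.toWord ∧ ((mk L : FreeGroup α) : FreeGroup α ⧸ H) = c}

section SuffixCosets

variable {H : Subgroup (FreeGroup α)} {C : Set (FreeGroup α ⧸ H)} {x y : FreeGroup α}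

theorem mk_mem_of_suffix_toWord_mul (hy : y ∈ H)
    (hxC : ∀ L, L <:+ x.toWord → ((mk L : FreeGroup α) : FreeGroup α ⧸ H) ∈ C)
    (hyC : ∀ L, L <:+ y.toWord → ((mk L : FreeGroup α) : FreeGroup α ⧸ H) ∈ C) :
    ∀ L, L <:+ (x * y).toWord → ((mk L : FreeGroup α) : FreeGroup α ⧸ H) ∈ C := by
  obtain ⟨p, r, q, hx, hy', hxy⟩ := exists_toWord_mul x y
  rintro L ⟨s, hs⟩
  rw [hxy] at hs
  rcases List.append_eq_append_iff.1 hs with ⟨a, rfl, rfl⟩ | ⟨a, rfl, rfl⟩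
  · have hy_eq : y = (mk r)⁻¹ * mk q := by rw [inv_mk, mul_mk, ← hy', mk_toWord]
    have : mk (a ++ q) = mk (a ++ r) * y := by
      rw [hy_eq, ← mul_mk, ← mul_mk, mul_assoc, mul_inv_cancel_left]
    rw [this, QuotientGroup.mk_mul_of_mem _ hy]
    exact hxC _ ⟨s, by rw [hx, List.append_assoc]⟩
  · exact hyC L ⟨invRev r ++ a, by rw [hy', List.append_assoc]⟩

theorem mk_mem_of_suffix_toWord_inv (hx : x ∈ H)
    (hxC : ∀ L, L <:+ x.toWord → ((mk L : FreeGroup α) : FreeGroup α ⧸ H) ∈ C) :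
    ∀ L, L <:+ x⁻¹.toWord → ((mk L : FreeGroup α) : FreeGroup α ⧸ H) ∈ C := by
  rintro L ⟨s, hs⟩
  have hxw : x.toWord = invRev L ++ invRev s := by
    rw [← invRev_append, hs, toWord_inv, invRev_invRev]
  have : mk L = mk (invRev s) * x⁻¹ := by
    rw [← mk_toWord (x := x), hxw, ← mul_mk, mul_inv_rev, mul_inv_cancel_left, inv_mk,
      invRev_invRev]
  rw [this, QuotientGroup.mk_mul_of_mem _ (inv_mem hx)]
  exact hxC _ ⟨invRev L, hxw.symm⟩

end SuffixCosets

theorem finite_suffixCosets {H : Subgroup (FreeGroup α)} (hH : H.FG) :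
    (suffixCosets H).Finite := by
  obtain ⟨T, rfl⟩ := hH
  have hwords : (insert [] (⋃ t ∈ T, {L | L ∈ t.toWord.tails})).Finite :=
    (Set.Finite.biUnion T.finite_toSet fun t _ => t.toWord.tails.finite_toSet).insert []
  refine (hwords.image fun L => ((mk L : FreeGroup α) : FreeGroup α ⧸ Subgroup.closure T)).subset
    ?_
  rintro _ ⟨u, hu, L, hL, rfl⟩
  induction hu using Subgroup.closure_induction generalizing L with
  | mem t ht => exact ⟨L, Or.inr (Set.mem_biUnion ht ((mem_tails _ _).2 hL)), rfl⟩
  | one => exact ⟨L, Or.inl (by simpa using hL), rfl⟩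
  | mul x y _ hy ihx ihy => exact mk_mem_of_suffix_toWord_mul hy ihx ihy L hL
  | inv x hx ih => exact mk_mem_of_suffix_toWord_inv hx ih L hL

theorem toWord_conj_pow {W : List (α × Bool)} (hW : IsCyclicallyReduced W) (hne : W ≠ [])
    {y : FreeGroup α} (h₁ : IsReduced (invRev W ++ y.toWord)) (h₂ : IsReduced (W ++ y.toWord))
    {k : ℕ} (hk : k ≠ 0) :
    (y⁻¹ * mk W ^ k * y).toWord = invRev y.toWord ++ (replicate k W).flatten ++ y.toWord := by
  conv_lhs => rw [← mk_toWord (x := y)]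
  rw [pow_mk, inv_mk, mul_mk, mul_mk, toWord_mk]
  refine IsReduced.reduce_eq (IsReduced.append_flatten_replicate_append hW ?_ hk)
  refine IsReduced.append_overlap ?_ h₂ hne
  simpa [invRev_append, invRev_invRev] using h₁.invRev

theorem mk_mem_suffixCosets {H : Subgroup (FreeGroup α)} {W : List (α × Bool)}
    (hW : IsCyclicallyReduced W) (hne : W ≠ []) (hpow : ∀ g, ∃ k ≠ 0, g⁻¹ * mk W ^ k * g ∈ H)
    {y : FreeGroup α} (h₁ : IsReduced (invRev W ++ y.toWord)) (h₂ : IsReduced (W ++ y.toWord)) :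
    (y : FreeGroup α ⧸ H) ∈ suffixCosets H := by
  obtain ⟨k, hk, hmem⟩ := hpow y
  exact ⟨_, hmem, y.toWord, ⟨_, (toWord_conj_pow hW hne h₁ h₂ hk).symm⟩, by rw [mk_toWord]⟩

end DecidableEq

theorem index_ne_zero_of_isCyclicallyReduced [Nontrivial α] {H : Subgroup (FreeGroup α)}
    (hH : H.FG) {W : List (α × Bool)} (hW : IsCyclicallyReduced W) (hne : W ≠ [])
    (hpow : ∀ g, ∃ k ≠ 0, g⁻¹ * mk W ^ k * g ∈ H) : H.index ≠ 0 := by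
  classical
  obtain ⟨t, ht⟩ : ∃ t : Finset (α × Bool), t.card = 4 := by
    obtain ⟨a, b, hab⟩ := exists_pair_ne α
    exact ⟨{a, b} ×ˢ Finset.univ, by simp [Finset.card_product, Finset.card_pair hab]⟩
  have hcover (z : FreeGroup α) :
      ∃ s ∈ t, ((mk [s] * z : FreeGroup α) : FreeGroup α ⧸ H) ∈ suffixCosets H := by
    obtain ⟨s, hst, h₁, h₂⟩ := exists_mem_isReduced_append_cons (t := t) (by omega) hW.isReduced
      hW.isReduced.invRev (isReduced_toWord (x := z))
    have hsz : (mk [s] * z).toWord = s :: z.toWord := by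
      rw [← mk_toWord (x := z), mul_mk, toWord_mk, mk_toWord, singleton_append]
      exact IsReduced.reduce_eq (h₂.infix ⟨invRev W, [], by simp⟩)
    exact ⟨s, hst, mk_mem_suffixCosets hW hne hpow (by rwa [hsz]) (by rwa [hsz])⟩
  rw [Subgroup.index_ne_zero_iff_finite, ← Set.finite_univ_iff]
  refine (t.finite_toSet.biUnion fun s _ =>
    (finite_suffixCosets hH).smul_set (a := (mk [s])⁻¹)).subset ?_
  rintro q -
  obtain ⟨z, rfl⟩ := QuotientGroup.mk_surjective q
  obtain ⟨s, hst, hz⟩ := hcover z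
  refine Set.mem_biUnion hst (Set.mem_smul_set_iff_inv_smul_mem.2 ?_)
  rwa [inv_inv, MulAction.Quotient.smul_mk, smul_eq_mul]

theorem index_ne_zero_of_subsingleton [Subsingleton α] {H : Subgroup (FreeGroup α)}
    (hH : H ≠ ⊥) : H.index ≠ 0 := by
  classical
  obtain ⟨x, -, hx⟩ := H.bot_or_exists_ne_one.resolve_left hH
  obtain ⟨a, -⟩ := List.exists_mem_of_ne_nil x.toWord (by simpa using hx)
  have := uniqueOfSubsingleton a.1
  exact Subgroup.index_ne_zero_of_isCyclic hH

theorem index_ne_zero_of_forall_exists_pow_mem {H : Subgroup (FreeGroup α)} (hH : H.FG)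
    {h : FreeGroup α} (hh : h ≠ 1) (hpow : ∀ g, ∃ k ≠ 0, g⁻¹ * h ^ k * g ∈ H) :
    H.index ≠ 0 := by
  classical
  rcases subsingleton_or_nontrivial α with hα | hα
  · obtain ⟨k, hk, hmem⟩ := hpow 1
    refine index_ne_zero_of_subsingleton fun hbot => hh ((pow_eq_one_iff_left hk).mp ?_)
    simpa [hbot] using hmem
  · set c := mk (reduceCyclically.conjugator h.toWord)
    set W := reduceCyclically h.toWord
    have hconj : c * mk W * c⁻¹ = h := by
      rw [inv_mk, mul_mk, mul_mk, reduceCyclically.conj_conjugator_reduceCyclically, mk_toWord]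
    refine index_ne_zero_of_isCyclicallyReduced (W := W) hH
      (reduceCyclically.isCyclicallyReduced (isReduced_toWord (x := h))) (fun hW => hh ?_)
      fun g => ?_
    · rw [← hconj, hW, ← one_eq_mk, mul_one, mul_inv_cancel]
    · obtain ⟨k, hk, hmem⟩ := hpow (c * g)
      refine ⟨k, hk, ?_⟩
      rw [← hconj, conj_pow] at hmem
      convert hmem using 1
      group

end FreeGroup

theorem stmt19_general {F : Type*} [Group F] [IsFreeGroup F]
    (H : Subgroup F) (hinf : Infinite ↥H) (hHfg : H.FG)
    (hcomm : ∀ g : F, Subgroup.Commensurable (conjSubgroup g H) H) :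
    H.index ≠ 0 := by
  classical
  obtain ⟨h, hhH, hh⟩ := H.nontrivial_iff_exists_ne_one.mp inferInstance
  let e := IsFreeGroup.toFreeGroup F
  rw [← H.index_map_equiv e]
  refine FreeGroup.index_ne_zero_of_forall_exists_pow_mem ?_ (e.map_ne_one_iff.mpr hh) fun g => ?_
  · obtain ⟨T, rfl⟩ := hHfg
    exact ⟨T.image e, by rw [MonoidHom.map_closure, Finset.coe_image]; rfl⟩
  · obtain ⟨k, hk, -, hmem, -⟩ :=
      Subgroup.exists_pow_mem_of_relIndex_ne_zero (hcomm (e.symm g)).1 hhH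
    exact ⟨k, hk.ne', (e.symm g)⁻¹ * h ^ k * e.symm g, mem_conjSubgroup.mp hmem, by simp⟩

theorem stmt19 {F : Type*} [Group F] [IsFreeGroup F] (hfg : Group.FG F)
    (H : Subgroup F) (hinf : Infinite ↥H) (hHfg : H.FG)
    (hcomm : ∀ g : F, Subgroup.Commensurable (conjSubgroup g H) H) :
    H.index ≠ 0 :=
  stmt19_general H hinf hHfg hcomm
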